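/- (Evolution of the Hubble variable.) Let Λ ∈ ℝ. Suppose on [t₀,T] we are given differentiable symmetric matrix-valued functions g^{ab}(t) (positive definite) and k^{ab}(t), a continuous symmetric matrix-valued function S^{ab}(t) and a continuous function ρ(t), satisfying dg^{ab}/dt = −2k^{ab} and dk^{ab}/dt = −2k^a_c k^{bc} − k k^{ab} + S^{ab} + (1/2)(ρ−S)g^{ab} + Λg^{ab}. Then the Hubble variable H = (1/3) g_{ab}k^{ab} is differentiable and satisfies dH/dt = −3H² + (1/2)ρ − (1/6)S + Λ. -/

import Mathlib

/-!
Contract the evolution equation of `k^{ab}` with `g_{ab}` and add the term coming from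
`d g_{ab}/dt = 2 k_{ab}`: the two quadratic contractions `∓ 2 k_{ab} k^{ab}` cancel, `-k k^{ab}`
contributes `-k² = -9H²`, and `g_{ab} g^{ab} = 3` produces the coefficients of `ρ`, `S` and `Λ`.
-/

open Matrix Real Set

noncomputable section

/-- 3×3 real matrices. -/
abbrev Mat3 := Matrix (Fin 3) (Fin 3) ℝ

/-- The trace `g_{ab} M^{ab}` of a matrix with upper indices (indices lowered with `G⁻¹`). -/
def trK (G M : Mat3) : ℝ := ∑ a, ∑ b, G⁻¹ a b * M a b

/-- The Hubble variable `H = (1/3) g_{ab} k^{ab}`. -/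
def Hub (G K : Mat3) : ℝ := (1 / 3) * trK G K

/-- The right hand side of the evolution equation for `k^{ab}` with abstract matter terms. -/
def kEvolAbs (Λ : ℝ) (G K SM : Mat3) (ρ : ℝ) : Mat3 :=
  (-2 : ℝ) • (K * G⁻¹ * K) - trK G K • K + SM + ((1 / 2) * (ρ - trK G SM)) • G + Λ • G

namespace Matrix

theorem sum_sum_mul_eq_trace_transpose_mul {m n R : Type*} [Fintype m] [Fintype n]
    [AddCommMonoid R] [Mul R] (A B : Matrix m n R) :
    ∑ i, ∑ j, A i j * B i j = trace (Aᵀ * B) := by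
  simp only [trace, diag_apply, mul_apply, transpose_apply]
  exact Finset.sum_comm

variable {n : Type*} [Fintype n] {f : ℝ → Matrix n n ℝ} {f' : Matrix n n ℝ} {s : Set ℝ} {t : ℝ}

theorem hasDerivWithinAt_iff_apply :
    HasDerivWithinAt f f' s t ↔ ∀ i j, HasDerivWithinAt (fun x => f x i j) (f' i j) s t :=
  hasDerivWithinAt_pi.trans (forall_congr' fun _ => hasDerivWithinAt_pi)

theorem _root_.HasDerivWithinAt.matrix_inv [DecidableEq n] (hf : HasDerivWithinAt f f' s t)
    (ht : IsUnit (f t).det) :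
    HasDerivWithinAt (fun x => (f x)⁻¹) (-((f t)⁻¹ * f' * (f t)⁻¹)) s t := by
  -- The ℓ∞ operator norm induces the product topology on matrices, so inversion may be
  -- differentiated in that normed algebra.
  let _ := Matrix.linftyOpNormedRing (n := n) (α := ℝ)
  let _ := Matrix.linftyOpNormedAlgebra (n := n) (α := ℝ) (R := ℝ)
  obtain ⟨u, hu⟩ := (isUnit_iff_isUnit_det _).mpr ht
  have hinv := hasFDerivAt_ringInverse (𝕜 := ℝ) u
  rw [hu, coe_units_inv, hu] at hinv
  have h := hinv.comp_hasDerivWithinAt t hf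
  simp only [Function.comp_def, ← nonsing_inv_eq_ringInverse] at h
  exact h

end Matrix

theorem trK_eq_trace {G : Mat3} (hG : G.IsSymm) (M : Mat3) : trK G M = trace (G⁻¹ * M) := by
  rw [trK, sum_sum_mul_eq_trace_transpose_mul, hG.inv.eq]

theorem hasDerivWithinAt_trK {g k : ℝ → Mat3} {g' k' : Mat3} {s : Set ℝ} {t : ℝ}
    (hg : HasDerivWithinAt g g' s t) (hk : HasDerivWithinAt k k' s t) (hdet : IsUnit (g t).det) :
    HasDerivWithinAt (fun x => trK (g x) (k x))
      (trK (g t) k' - trace (((g t)⁻¹ * g' * (g t)⁻¹)ᵀ * k t)) s t := by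
  have hinv := hasDerivWithinAt_iff_apply.1 (hg.matrix_inv hdet)
  have hk' := hasDerivWithinAt_iff_apply.1 hk
  refine (HasDerivWithinAt.fun_sum fun a _ => HasDerivWithinAt.fun_sum fun b _ =>
    (hinv a b).mul (hk' a b)).congr_deriv ?_
  simp only [trK, Finset.sum_add_distrib, sum_sum_mul_eq_trace_transpose_mul, transpose_neg,
    Matrix.neg_mul, trace_neg]
  ring

theorem trK_kEvolAbs {G K : Mat3} (hG : G.IsSymm) (hdet : IsUnit G.det) (Λ ρ : ℝ) (S : Mat3) :
    trK G (kEvolAbs Λ G K S ρ) =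
      -2 * trace (G⁻¹ * K * G⁻¹ * K) - trK G K ^ 2 - 1 / 2 * trK G S + 3 / 2 * ρ + 3 * Λ := by
  simp only [trK_eq_trace hG, kEvolAbs, Matrix.mul_add, Matrix.mul_sub, Matrix.mul_smul,
    trace_add, trace_sub, trace_smul, nonsing_inv_mul _ hdet, trace_one, Fintype.card_fin,
    smul_eq_mul, Matrix.mul_assoc]
  ring

theorem stmt15_general (Λ t₀ T : ℝ)
    (g k SM : ℝ → Mat3) (ρ : ℝ → ℝ)
    (hgpd : ∀ t ∈ Icc t₀ T, (g t).PosDef)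
    (hksym : ∀ t ∈ Icc t₀ T, (k t).IsSymm)
    (hgode : ∀ a b : Fin 3, ∀ t ∈ Icc t₀ T,
      HasDerivWithinAt (fun s => g s a b) (-2 * k t a b) (Icc t₀ T) t)
    (hkode : ∀ a b : Fin 3, ∀ t ∈ Icc t₀ T,
      HasDerivWithinAt (fun s => k s a b)
        (kEvolAbs Λ (g t) (k t) (SM t) (ρ t) a b) (Icc t₀ T) t) :
    ∀ t ∈ Icc t₀ T,
      HasDerivWithinAt (fun s => Hub (g s) (k s))
        (-3 * Hub (g t) (k t) ^ 2 + (1 / 2) * ρ t - (1 / 6) * trK (g t) (SM t) + Λ)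
        (Icc t₀ T) t := by
  intro t ht
  have hG : (g t).IsSymm := by
    simpa [IsHermitian, IsSymm] using (hgpd t ht).isHermitian
  have hK : (k t).IsSymm := hksym t ht
  have hdet : IsUnit (g t).det := (hgpd t ht).det_pos.ne'.isUnit
  have hg : HasDerivWithinAt g ((-2 : ℝ) • k t) (Icc t₀ T) t :=
    hasDerivWithinAt_iff_apply.2 fun a b => by simpa using hgode a b t ht
  have hk : HasDerivWithinAt k (kEvolAbs Λ (g t) (k t) (SM t) (ρ t)) (Icc t₀ T) t :=
    hasDerivWithinAt_iff_apply.2 fun a b => hkode a b t ht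
  have hcontract : trace (((g t)⁻¹ * ((-2 : ℝ) • k t) * (g t)⁻¹)ᵀ * k t) =
      -2 * trace ((g t)⁻¹ * k t * (g t)⁻¹ * k t) := by
    simp [transpose_mul, hG.inv.eq, hK.eq, Matrix.mul_assoc]
  refine ((hasDerivWithinAt_trK hg hk hdet).const_mul (1 / 3)).congr_deriv ?_
  rw [hcontract, trK_kEvolAbs hG hdet, Hub]
  ring

/-- evolution of the Hubble variable. If `g, k` satisfy the Einstein
evolution equations with matter terms `S^{ab}`, `ρ`, then `H = (1/3) g_{ab}k^{ab}` is
differentiable with `dH/dt = −3H² + (1/2)ρ − (1/6)S + Λ`, where `S = g_{ab}S^{ab}`. -/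
theorem stmt15 (Λ t₀ T : ℝ) (hT : t₀ ≤ T)
    (g k SM : ℝ → Mat3) (ρ : ℝ → ℝ)
    (hgpd : ∀ t ∈ Icc t₀ T, (g t).PosDef)
    (hksym : ∀ t ∈ Icc t₀ T, (k t).IsSymm)
    (hSsym : ∀ t ∈ Icc t₀ T, (SM t).IsSymm)
    (hScont : ∀ a b : Fin 3, ContinuousOn (fun t => SM t a b) (Icc t₀ T))
    (hρcont : ContinuousOn ρ (Icc t₀ T))
    (hgode : ∀ a b : Fin 3, ∀ t ∈ Icc t₀ T,
      HasDerivWithinAt (fun s => g s a b) (-2 * k t a b) (Icc t₀ T) t)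
    (hkode : ∀ a b : Fin 3, ∀ t ∈ Icc t₀ T,
      HasDerivWithinAt (fun s => k s a b)
        (kEvolAbs Λ (g t) (k t) (SM t) (ρ t) a b) (Icc t₀ T) t) :
    ∀ t ∈ Icc t₀ T,
      HasDerivWithinAt (fun s => Hub (g s) (k s))
        (-3 * Hub (g t) (k t) ^ 2 + (1 / 2) * ρ t - (1 / 6) * trK (g t) (SM t) + Λ)
        (Icc t₀ T) t :=
  stmt15_general Λ t₀ T g k SM ρ hgpd hksym hgode hkode
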